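/- For every n ≥ 3 there exists a coloring model on n vertices with at most 2 colors per vertex such that in the induced random graph distribution every unordered pair e of distinct vertices has marginal probability Pr[X_e] = 1/4, and the sampled graph is disconnected with probability 1. -/

import Mathlib

/-!
Color every vertex by a fair coin and fix two vertices `z ≠ l`. Two vertices other than `z` are
adjacent when both are colored `true`; `z` is adjacent to `l` when `z` is `true` and `l` is
`false`, and to any other vertex when both are `false`. Every pair is thus an edge exactly when
its two endpoints take one prescribed pair of colors, which has probability `1/4`. The graph is
never connected: according to the colors of `z` and `l`, either `l` is isolated (both `false`),
the `false` vertices form a union of components containing `z` but not `l` (`z` false, `l` true),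
`{z, l}` is a component (`z` true, `l` false), or `z` is isolated (both `true`).
-/

open scoped Classical

structure ColoringModel (n : ℕ) where
  Ω : Fin n → Type
  fin : ∀ v, Fintype (Ω v)
  p : ∀ v, Ω v → ℝ
  nonneg : ∀ v ω, 0 ≤ p v ω
  sum_one : ∀ v, ∑ ω ∈ @Finset.univ (Ω v) (fin v), p v ω = 1
  f : ∀ u v : Fin n, Ω u → Ω v → Bool
  symm : ∀ u v x y, f u v x y = f v u y x

def ColoringModel.graph {n : ℕ} (M : ColoringModel n) (ω : ∀ v, M.Ω v) :
    SimpleGraph (Fin n) where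
  Adj u v := u ≠ v ∧ M.f u v (ω u) (ω v) = true
  symm := ⟨by
    rintro u v ⟨h1, h2⟩
    refine ⟨h1.symm, ?_⟩
    rw [M.symm]
    exact h2⟩
  loopless := ⟨fun u h => h.1 rfl⟩

noncomputable def ColoringModel.pr {n : ℕ} (M : ColoringModel n)
    (P : SimpleGraph (Fin n) → Prop) : ℝ :=
  letI := M.fin
  ∑ ω : (∀ v, M.Ω v), if P (M.graph ω) then ∏ v, M.p v (ω v) else 0

noncomputable def ColoringModel.dist {n : ℕ} (M : ColoringModel n)
    (G : SimpleGraph (Fin n)) : ℝ :=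
  M.pr (fun H => H = G)

theorem Fintype.sum_ite_forall_prod {R ι : Type*} [CommSemiring R] [Fintype ι] [DecidableEq ι]
    {κ : ι → Type*} [∀ i, Fintype (κ i)] (A : ∀ i, κ i → Prop) [∀ i, DecidablePred (A i)]
    (p : ∀ i, κ i → R) :
    ∑ ω : ∀ i, κ i, (if ∀ i, A i (ω i) then ∏ i, p i (ω i) else 0) =
      ∏ i, ∑ x, if A i x then p i x else 0 := by
  simp only [Fintype.prod_sum, Fintype.prod_ite_zero]

theorem SimpleGraph.not_connected_of_adj_closed {V : Type*} {G : SimpleGraph V} (S : Set V)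
    {u v : V} (hu : u ∈ S) (hv : v ∉ S) (hS : ∀ a b, G.Adj a b → a ∈ S → b ∈ S) :
    ¬ G.Connected := fun hG => by
  obtain ⟨d, -, hd, hd'⟩ := (hG.preconnected u v).some.exists_boundary_dart S hu hv
  exact hd' (hS _ _ d.adj hd)

namespace ColoringModel

variable {n : ℕ}

theorem pr_eq_one_of_forall (M : ColoringModel n) {P : SimpleGraph (Fin n) → Prop}
    (hP : ∀ ω, P (M.graph ω)) : M.pr P = 1 := by
  let := M.fin
  simp only [pr, hP, if_true, ← Fintype.prod_sum]
  exact Finset.prod_eq_one fun v _ => M.sum_one v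

noncomputable def ofTarget (t : Fin n → Fin n → Bool) : ColoringModel n where
  Ω _ := Bool
  fin _ := inferInstance
  p _ _ := 1 / 2
  nonneg _ _ := by norm_num
  sum_one _ := by norm_num
  f u v x y := x == t u v && y == t v u
  symm _ _ _ _ := Bool.and_comm ..

variable (t : Fin n → Fin n → Bool)

theorem ofTarget_graph_adj (ω : Fin n → Bool) {u v : Fin n} :
    ((ofTarget t).graph ω).Adj u v ↔ u ≠ v ∧ ω u = t u v ∧ ω v = t v u := by
  simp [graph, ofTarget]

theorem pr_ofTarget_adj {u v : Fin n} (huv : u ≠ v) :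
    (ofTarget t).pr (fun G => G.Adj u v) = 1 / 4 := by
  let A : Fin n → Bool → Prop := fun i x => (i = u → x = t u v) ∧ (i = v → x = t v u)
  have hadj (ω : Fin n → Bool) : ((ofTarget t).graph ω).Adj u v ↔ ∀ i, A i (ω i) := by
    rw [ofTarget_graph_adj]
    exact ⟨fun ⟨_, hu, hv⟩ i => ⟨fun h => h ▸ hu, fun h => h ▸ hv⟩,
      fun h => ⟨huv, (h u).1 rfl, (h v).2 rfl⟩⟩
  have hfactor (i : Fin n) :
      ∑ x, (if A i x then (1 / 2 : ℝ) else 0) = if i ∈ ({u, v} : Finset _) then 1 / 2 else 1 := by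
    simp only [A, Fintype.sum_bool, Finset.mem_insert, Finset.mem_singleton]
    by_cases hu : i = u
    · subst hu; cases t i v <;> simp [huv]
    by_cases hv : i = v
    · subst hv; cases t i u <;> simp [hu]
    · norm_num [hu, hv]
  calc (ofTarget t).pr (fun G => G.Adj u v)
      = ∏ i, ∑ x, (if A i x then (1 / 2 : ℝ) else 0) := by
        rw [← Fintype.sum_ite_forall_prod]
        refine Finset.sum_congr rfl fun ω _ => ?_
        simp only [hadj ω]
        congr
    _ = 1 / 4 := by
        rw [Finset.prod_congr rfl fun i _ => hfactor i, Fintype.prod_ite_mem, Finset.prod_const,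
          Finset.card_pair huv]
        norm_num

def disconnectingTarget (z l u v : Fin n) : Bool :=
  if u = z then decide (v = l) else decide (v ≠ z)

theorem not_connected_ofTarget_disconnectingTarget {z l w : Fin n} (hzl : z ≠ l) (hzw : z ≠ w)
    (hlw : l ≠ w) (ω : Fin n → Bool) :
    ¬ ((ofTarget (disconnectingTarget z l)).graph ω).Connected := by
  have adj (a b : Fin n) := ofTarget_graph_adj (disconnectingTarget z l) ω (u := a) (v := b)
  simp only [disconnectingTarget] at adj
  rcases hz : ω z with _ | _ <;> rcases hl : ω l with _ | _
  · exact SimpleGraph.not_connected_of_adj_closed {a | a ≠ l} (u := z) (v := l) hzl (by simp)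
      fun a b hab ha => by grind
  · exact SimpleGraph.not_connected_of_adj_closed {a | ω a = false} (u := z) (v := l) hz
      (by simp [hl]) fun a b hab ha => by grind
  · exact SimpleGraph.not_connected_of_adj_closed {z, l} (u := z) (v := w) (by simp)
      (by simp [hzw.symm, hlw.symm]) fun a b hab ha => by grind
  · exact SimpleGraph.not_connected_of_adj_closed {a | a ≠ z} (u := w) (v := z) hzw.symm
      (by simp) fun a b hab ha => by grind

end ColoringModel

theorem two_color_lower_bound (n : ℕ) (hn : 3 ≤ n) :
    ∃ M : ColoringModel n, (∀ v, Nat.card (M.Ω v) ≤ 2) ∧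
      (∀ u v : Fin n, u ≠ v → M.pr (fun G => G.Adj u v) = 1 / 4) ∧
      M.pr (fun G => ¬ G.Connected) = 1 := by
  let z : Fin n := ⟨0, by omega⟩
  let l : Fin n := ⟨1, by omega⟩
  let w : Fin n := ⟨2, by omega⟩
  have hzl : z ≠ l := by simp [z, l, Fin.ext_iff]
  have hzw : z ≠ w := by simp [z, w, Fin.ext_iff]
  have hlw : l ≠ w := by simp [l, w, Fin.ext_iff]
  refine ⟨.ofTarget (ColoringModel.disconnectingTarget z l),
    fun _ => by simp [ColoringModel.ofTarget],
    fun u v huv => ColoringModel.pr_ofTarget_adj _ huv, ?_⟩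
  exact ColoringModel.pr_eq_one_of_forall _
    (ColoringModel.not_connected_ofTarget_disconnectingTarget hzl hzw hlw)
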